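/- Let φ_λ(x) = e^{-πλ²|x|²} on R^d and window g(x) = e^{-π|x|²}. For 1 ≤ p, q ≤ ∞, the mixed-norm of the STFT satisfies ||V_g φ_λ||_{L^{p,q}} := ( ∫ ( ∫ |V_g φ_λ(x,ω)|^p dx )^{q/p} dω )^{1/q} ≍ λ^{-d/p} (1+λ)^{d(1/p + 1/q - 1)}, with implied constants depending only on d, p, q (and not on λ > 0). -/

import Mathlib

open MeasureTheory Complex ComplexConjugate SchwartzMap
open scoped RealInnerProductSpace ENNReal

noncomputable section

abbrev Ed (d : ℕ) : Type := EuclideanSpace ℝ (Fin d)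

/-- Fourier transform with the normalization `𝓕 f η = ∫ f(y) e^{-2πi y·η} dy`. -/
def FT {d : ℕ} (f : Ed d → ℂ) (η : Ed d) : ℂ :=
  ∫ y, Complex.exp (-(2 * (Real.pi : ℂ) * Complex.I * (⟪y, η⟫ : ℂ))) * f y

/-- Inverse Fourier transform. -/
def FTinv {d : ℕ} (f : Ed d → ℂ) (x : Ed d) : ℂ :=
  ∫ η, Complex.exp (2 * (Real.pi : ℂ) * Complex.I * (⟪x, η⟫ : ℂ)) * f η

/-- Short-time Fourier transform of `f` with window `g`. -/
def STFT {d : ℕ} (g f : Ed d → ℂ) (x ω : Ed d) : ℂ :=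
  ∫ y, Complex.exp (-(2 * (Real.pi : ℂ) * Complex.I * (⟪ω, y⟫ : ℂ))) * f y * conj (g (y - x))

open Real FourierTransform

/-! Completing the square, `a‖y‖² + b‖y - x‖² = (a + b)‖y - c‖² + (ab/(a + b))‖x‖²` with
`c = (b/(a + b)) x`, turns the STFT of a Gaussian against a Gaussian window into a modulated
Fourier transform of a Gaussian, so `|V_g φ_λ(x, ω)|` is an explicit product of a Gaussian in `x`
and a Gaussian in `ω`. Since `‖K e^{-πa‖x‖²}‖_p = K (ap)^{-d/(2p)}`, the mixed norm equals
`p^{-d/(2p)} q^{-d/(2q)} λ^{-d/p} (1 + λ²)^{(d/2)(1/p + 1/q - 1)}` exactly, and `1 + λ²` is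
comparable to `(1 + λ)²` up to a factor `2`. -/

lemma mul_norm_add_sq_add_mul_norm_sub_sq {V : Type*} [NormedAddCommGroup V]
    [InnerProductSpace ℝ V] {a b : ℝ} (hs : a + b ≠ 0) (x z : V) :
    a * ‖z + (b / (a + b)) • x‖ ^ 2 + b * ‖z + (b / (a + b)) • x - x‖ ^ 2 =
      (a + b) * ‖z‖ ^ 2 + a * b / (a + b) * ‖x‖ ^ 2 := by
  have hx : z + (b / (a + b)) • x - x = z + (-(a / (a + b))) • x := by
    rw [show -(a / (a + b)) = b / (a + b) - 1 by field_simp; ring, sub_smul, one_smul]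
    abel
  rw [hx, norm_add_sq_real, norm_add_sq_real, inner_smul_right, inner_smul_right, norm_smul,
    norm_smul, Real.norm_eq_abs, Real.norm_eq_abs, mul_pow, mul_pow, sq_abs, sq_abs]
  field_simp
  ring

lemma enorm_le_eLpNormEssSup_of_continuous {α E : Type*} [TopologicalSpace α] [MeasurableSpace α]
    [NormedAddCommGroup E] {μ : Measure α} [μ.IsOpenPosMeasure] {f : α → E}
    (hf : Continuous f) (x : α) : ‖f x‖ₑ ≤ eLpNormEssSup f μ := by
  have h := ae_le_eLpNormEssSup (f := f) (μ := μ)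
  rw [ae_iff] at h
  have hopen : IsOpen {y | ¬‖f y‖ₑ ≤ eLpNormEssSup f μ} := by
    simp_rw [not_le]
    exact isOpen_lt continuous_const hf.enorm
  by_contra hx
  exact hopen.measure_ne_zero μ ⟨x, hx⟩ h

section Gaussian

variable {V W : Type*} [NormedAddCommGroup V] [InnerProductSpace ℝ V] [FiniteDimensional ℝ V]
  [MeasurableSpace V] [BorelSpace V] [NormedAddCommGroup W] [InnerProductSpace ℝ W]
  [FiniteDimensional ℝ W] [MeasurableSpace W] [BorelSpace W]

lemma integral_rexp_neg_pi_mul_sq_norm {c : ℝ} (hc : 0 < c) :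
    ∫ x : V, rexp (-(π * c * ‖x‖ ^ 2)) = c ^ (-(Module.finrank ℝ V : ℝ) / 2) := by
  convert GaussianFourier.integral_rexp_neg_mul_sq_norm (V := V) (by positivity : 0 < π * c)
    using 1
  · simp only [neg_mul]
  · rw [show π / (π * c) = c⁻¹ by field_simp, inv_rpow hc.le, ← rpow_neg hc.le, neg_div]

lemma eLpNormEssSup_gaussian {K a : ℝ} (hK : 0 ≤ K) (ha : 0 ≤ a) :
    eLpNormEssSup (fun x : V => K * rexp (-(π * a * ‖x‖ ^ 2))) volume = ENNReal.ofReal K := by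
  apply le_antisymm
  · refine eLpNormEssSup_le_of_ae_bound (ae_of_all _ fun x => ?_)
    rw [Real.norm_of_nonneg (by positivity)]
    refine mul_le_of_le_one_right hK (exp_le_one_iff.mpr ?_)
    exact neg_nonpos.mpr (by positivity)
  · have h := enorm_le_eLpNormEssSup_of_continuous (μ := volume)
      (f := fun x : V => K * rexp (-(π * a * ‖x‖ ^ 2))) (by fun_prop) 0
    simpa [Real.enorm_of_nonneg hK] using h

lemma eLpNorm_gaussian {p : ℝ≥0∞} (hp : p ≠ 0) {K a : ℝ} (hK : 0 ≤ K) (ha : 0 < a) :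
    eLpNorm (fun x : V => K * rexp (-(π * a * ‖x‖ ^ 2))) p volume =
      ENNReal.ofReal (K * (a * p.toReal) ^ (-(Module.finrank ℝ V : ℝ) / 2 / p.toReal)) := by
  rcases eq_or_ne p ∞ with rfl | hp_top
  · -- `∞.toReal = 0` and `x / 0 = 0`, so the claimed value is `K * 1`.
    simp [eLpNormEssSup_gaussian hK ha.le]
  have hp_pos : 0 < p.toReal := ENNReal.toReal_pos hp hp_top
  have hpow : ∀ x : V, ‖K * rexp (-(π * a * ‖x‖ ^ 2))‖ₑ ^ p.toReal =
      ENNReal.ofReal (K ^ p.toReal * rexp (-(π * (a * p.toReal) * ‖x‖ ^ 2))) := by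
    intro x
    rw [Real.enorm_of_nonneg (by positivity), ENNReal.ofReal_rpow_of_nonneg (by positivity)
      hp_pos.le, mul_rpow hK (exp_pos _).le, ← exp_mul]
    ring_nf
  have hint := integral_rexp_neg_pi_mul_sq_norm (V := V) (mul_pos ha hp_pos)
  have hintegrable : Integrable (fun x : V => rexp (-(π * (a * p.toReal) * ‖x‖ ^ 2))) :=
    .of_integral_ne_zero (by rw [hint]; positivity)
  rw [eLpNorm_eq_lintegral_rpow_enorm_toReal hp hp_top]
  simp_rw [hpow]
  rw [← ofReal_integral_eq_lintegral_ofReal (hintegrable.const_mul _)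
      (ae_of_all _ fun x => by positivity), integral_const_mul, hint,
    ENNReal.ofReal_rpow_of_nonneg (by positivity) (by positivity),
    mul_rpow (by positivity) (by positivity), ← rpow_mul hK, ← rpow_mul (by positivity),
    mul_one_div_cancel hp_pos.ne', rpow_one]
  congr 3
  field_simp

lemma eLpNorm_eLpNorm_of_norm_eq_gaussian {E : Type*} [NormedAddCommGroup E] {F : W → V → E}
    {p q : ℝ≥0∞} (hp : p ≠ 0) (hq : q ≠ 0) {K α β : ℝ} (hK : 0 ≤ K) (hα : 0 < α) (hβ : 0 < β)
    (hF : ∀ ω x, ‖F ω x‖ = K * rexp (-(π * β * ‖ω‖ ^ 2)) * rexp (-(π * α * ‖x‖ ^ 2))) :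
    eLpNorm (fun ω => (eLpNorm (F ω) p volume).toReal) q volume =
      ENNReal.ofReal (K * (α * p.toReal) ^ (-(Module.finrank ℝ V : ℝ) / 2 / p.toReal) *
        (β * q.toReal) ^ (-(Module.finrank ℝ W : ℝ) / 2 / q.toReal)) := by
  have hinner : ∀ ω, (eLpNorm (F ω) p volume).toReal =
      K * (α * p.toReal) ^ (-(Module.finrank ℝ V : ℝ) / 2 / p.toReal) *
        rexp (-(π * β * ‖ω‖ ^ 2)) := by
    intro ω
    rw [← eLpNorm_norm, funext (hF ω), eLpNorm_gaussian hp (by positivity) hα,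
      ENNReal.toReal_ofReal (by positivity)]
    ring
  simp_rw [hinner]
  rw [eLpNorm_gaussian hq (by positivity) hβ]

end Gaussian

lemma FT_eq_fourier {d : ℕ} (f : Ed d → ℂ) : FT f = 𝓕 f := by
  ext η
  rw [FT, fourier_eq']
  congr 1 with y
  rw [smul_eq_mul]
  push_cast
  ring_nf

lemma FT_gaussian {d : ℕ} {s : ℝ} (hs : 0 < s) (η : Ed d) :
    FT (fun y => cexp (-((π * s * ‖y‖ ^ 2 : ℝ) : ℂ))) η =
      ((s ^ (-((d : ℝ) / 2)) : ℝ) : ℂ) * cexp (-((π * s⁻¹ * ‖η‖ ^ 2 : ℝ) : ℂ)) := by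
  have hb : 0 < ((π * s : ℝ) : ℂ).re := by simpa using mul_pos pi_pos hs
  have h := fourier_gaussian_innerProductSpace hb η
  rw [FT_eq_fourier]
  convert h using 2 with y
  · push_cast; ring_nf
  · rw [finrank_euclideanSpace_fin, show (π : ℂ) / ((π * s : ℝ) : ℂ) = ((s⁻¹ : ℝ) : ℂ) by
      push_cast; field_simp, show ((d : ℂ) / 2) = (((d : ℝ) / 2 : ℝ) : ℂ) by push_cast; ring,
      ← ofReal_cpow (by positivity), inv_rpow hs.le, rpow_neg hs.le]
  · push_cast; field_simp

lemma STFT_gaussian {d : ℕ} {a b : ℝ} (hs : a + b ≠ 0) (x ω : Ed d) :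
    STFT (fun y => cexp (-((π * b * ‖y‖ ^ 2 : ℝ) : ℂ)))
        (fun y => cexp (-((π * a * ‖y‖ ^ 2 : ℝ) : ℂ))) x ω =
      cexp (-((π * (a * b / (a + b)) * ‖x‖ ^ 2 : ℝ) : ℂ)) *
        cexp (-(2 * π * I * ⟪ω, (b / (a + b)) • x⟫)) *
        FT (fun y => cexp (-((π * (a + b) * ‖y‖ ^ 2 : ℝ) : ℂ))) ω := by
  rw [STFT, FT, ← integral_add_right_eq_self _ ((b / (a + b)) • x), ← integral_const_mul]
  congr 1 with z
  have key := congrArg (fun r : ℝ => ((π * r : ℝ) : ℂ))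
    (mul_norm_add_sq_add_mul_norm_sub_sq hs x z)
  simp only [← Complex.exp_conj, map_neg, conj_ofReal, ← Complex.exp_add, inner_add_right,
    real_inner_comm z ω]
  congr 1
  push_cast at key ⊢
  linear_combination -key

lemma norm_STFT_gaussian {d : ℕ} {a b : ℝ} (hs : 0 < a + b) (x ω : Ed d) :
    ‖STFT (fun y => cexp (-((π * b * ‖y‖ ^ 2 : ℝ) : ℂ)))
        (fun y => cexp (-((π * a * ‖y‖ ^ 2 : ℝ) : ℂ))) x ω‖ =
      (a + b) ^ (-((d : ℝ) / 2)) * rexp (-(π * (a + b)⁻¹ * ‖ω‖ ^ 2)) *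
        rexp (-(π * (a * b / (a + b)) * ‖x‖ ^ 2)) := by
  rw [STFT_gaussian hs.ne', FT_gaussian hs, norm_mul, norm_mul, norm_mul, Complex.norm_exp,
    Complex.norm_exp, Complex.norm_exp, norm_real, Real.norm_of_nonneg (by positivity)]
  simp only [neg_re, ofReal_re, mul_re, mul_im, ofReal_im, I_re, I_im, re_ofNat, im_ofNat]
  ring_nf
  rw [Real.exp_zero]
  ring

lemma eLpNorm_eLpNorm_STFT_gaussian {d : ℕ} {p q : ℝ≥0∞} (hp : p ≠ 0) (hq : q ≠ 0) {a b : ℝ}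
    (ha : 0 < a) (hb : 0 < b) :
    eLpNorm (fun ω : Ed d => (eLpNorm (fun x : Ed d =>
        STFT (fun y => cexp (-((π * b * ‖y‖ ^ 2 : ℝ) : ℂ)))
          (fun y => cexp (-((π * a * ‖y‖ ^ 2 : ℝ) : ℂ))) x ω) p volume).toReal) q volume =
      ENNReal.ofReal ((a + b) ^ (-((d : ℝ) / 2)) *
        (a * b / (a + b) * p.toReal) ^ (-(d : ℝ) / 2 / p.toReal) *
        ((a + b)⁻¹ * q.toReal) ^ (-(d : ℝ) / 2 / q.toReal)) := by
  simpa only [finrank_euclideanSpace_fin] using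
    eLpNorm_eLpNorm_of_norm_eq_gaussian (F := fun ω x => STFT _ _ x ω) hp hq (by positivity)
      (by positivity) (by positivity) fun ω x => norm_STFT_gaussian (by positivity) x ω

lemma eLpNorm_eLpNorm_STFT_dilated_gaussian {d : ℕ} {p q : ℝ≥0∞} (hp : p ≠ 0) (hq : q ≠ 0)
    {lam : ℝ} (hlam : 0 < lam) :
    eLpNorm (fun ω : Ed d => (eLpNorm (fun x : Ed d =>
        STFT (fun y => cexp (-((π * ‖y‖ ^ 2 : ℝ) : ℂ)))
          (fun y => cexp (-((π * lam ^ 2 * ‖y‖ ^ 2 : ℝ) : ℂ))) x ω) p volume).toReal) q volume =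
      ENNReal.ofReal (p.toReal ^ (-(d : ℝ) / 2 / p.toReal) *
        q.toReal ^ (-(d : ℝ) / 2 / q.toReal) * (lam ^ (-((d : ℝ) / p.toReal)) *
          (lam ^ 2 + 1) ^ ((d : ℝ) / 2 * (1 / p.toReal + 1 / q.toReal - 1)))) := by
  have hwindow : (fun y : Ed d => cexp (-((π * ‖y‖ ^ 2 : ℝ) : ℂ))) =
      fun y => cexp (-((π * 1 * ‖y‖ ^ 2 : ℝ) : ℂ)) := by simp only [mul_one]
  rw [hwindow, eLpNorm_eLpNorm_STFT_gaussian hp hq (by positivity) one_pos]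
  congr 1
  set s := lam ^ 2 + 1
  have hs : 0 < s := by positivity
  set y := -(d : ℝ) / 2 / p.toReal
  set z := -(d : ℝ) / 2 / q.toReal
  have hp0 : 0 ≤ p.toReal := ENNReal.toReal_nonneg
  have hq0 : 0 ≤ q.toReal := ENNReal.toReal_nonneg
  rw [mul_one, mul_rpow (by positivity) hp0, div_rpow (by positivity) hs.le,
    ← rpow_natCast, ← rpow_mul hlam.le, mul_rpow (by positivity) hq0, inv_rpow hs.le,
    show (d : ℝ) / 2 * (1 / p.toReal + 1 / q.toReal - 1) = -((d : ℝ) / 2) + -y + -z by ring,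
    rpow_add hs, rpow_add hs, rpow_neg hs.le y, rpow_neg hs.le z,
    show ((2 : ℕ) : ℝ) * y = -((d : ℝ) / p.toReal) by push_cast; ring]
  field_simp

lemma rpow_div_self_pos {r : ℝ} (hr : 0 ≤ r) (c : ℝ) : 0 < r ^ (c / r) := by
  rcases hr.eq_or_lt with rfl | hr
  · simp
  · exact rpow_pos_of_pos hr _

lemma rpow_le_two_rpow_abs_mul_rpow {u v : ℝ} (hu : 0 < u) (hv : 0 < v) (huv : u ≤ 2 * v)
    (hvu : v ≤ 2 * u) (E : ℝ) : u ^ E ≤ 2 ^ |E| * v ^ E := by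
  have hlog : |Real.log u - Real.log v| ≤ Real.log 2 := by
    rw [abs_sub_le_iff, sub_le_iff_le_add, sub_le_iff_le_add, ← Real.log_mul two_ne_zero hv.ne',
      ← Real.log_mul two_ne_zero hu.ne']
    exact ⟨Real.log_le_log hu huv, Real.log_le_log hv hvu⟩
  have hexp : (Real.log u - Real.log v) * E ≤ Real.log 2 * |E| := by
    calc (Real.log u - Real.log v) * E ≤ |Real.log u - Real.log v| * |E| := by
          rw [← abs_mul]; exact le_abs_self _
      _ ≤ Real.log 2 * |E| := by gcongr
  rw [rpow_def_of_pos hu, rpow_def_of_pos two_pos, rpow_def_of_pos hv, ← Real.exp_add]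
  exact Real.exp_le_exp.mpr (by linarith)

lemma inv_mul_le_and_le_mul_of_le_mul {A c t y : ℝ} (hA : 0 < A) (hc : 0 < c) (ht : 0 ≤ t)
    (hty : t ≤ c * y) (hyt : y ≤ c * t) :
    (max A A⁻¹ * c)⁻¹ * y ≤ A * t ∧ A * t ≤ max A A⁻¹ * c * y := by
  have hM : 0 < max A A⁻¹ := hA.trans_le (le_max_left _ _)
  constructor
  · calc (max A A⁻¹ * c)⁻¹ * y ≤ (max A A⁻¹ * c)⁻¹ * (c * t) := by gcongr
      _ = (max A A⁻¹)⁻¹ * t := by field_simp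
      _ ≤ A * t := by
        gcongr
        exact inv_le_of_inv_le₀ hA (le_max_right _ _)
  · calc A * t ≤ max A A⁻¹ * (c * y) := by gcongr; exact le_max_left _ _
      _ = max A A⁻¹ * c * y := by ring

/-- for `1 ≤ p, q ≤ ∞`, the mixed `L^{p,q}` norm of the STFT of the dilated
Gaussian `φ_λ(x) = e^{-πλ²|x|²}` with Gaussian window satisfies
`‖V_g φ_λ‖_{L^{p,q}} ≍ λ^{-d/p} (1+λ)^{d(1/p+1/q-1)}`, with constants independent of `λ > 0`.
(The conventions `1/∞ = 0` are realized via `ENNReal.toReal` and division by zero.) -/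
theorem stmt_17 (d : ℕ) (p q : ℝ≥0∞) (hp : 1 ≤ p) (hq : 1 ≤ q) :
    ∃ C : ℝ, 0 < C ∧ ∀ lam : ℝ, 0 < lam →
      (ENNReal.ofReal (C⁻¹ * (lam ^ (-((d : ℝ) / p.toReal)) *
          (1 + lam) ^ ((d : ℝ) * (1 / p.toReal + 1 / q.toReal - 1))))
        ≤ eLpNorm (fun ω : Ed d =>
            (eLpNorm (fun x : Ed d =>
              STFT (fun y => Complex.exp (-((Real.pi * ‖y‖ ^ 2 : ℝ) : ℂ)))
                (fun y => Complex.exp (-((Real.pi * lam ^ 2 * ‖y‖ ^ 2 : ℝ) : ℂ))) x ω)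
              p volume).toReal) q volume)
      ∧ eLpNorm (fun ω : Ed d =>
            (eLpNorm (fun x : Ed d =>
              STFT (fun y => Complex.exp (-((Real.pi * ‖y‖ ^ 2 : ℝ) : ℂ)))
                (fun y => Complex.exp (-((Real.pi * lam ^ 2 * ‖y‖ ^ 2 : ℝ) : ℂ))) x ω)
              p volume).toReal) q volume
        ≤ ENNReal.ofReal (C * (lam ^ (-((d : ℝ) / p.toReal)) *
            (1 + lam) ^ ((d : ℝ) * (1 / p.toReal + 1 / q.toReal - 1)))) := by
  set E : ℝ := (d : ℝ) / 2 * (1 / p.toReal + 1 / q.toReal - 1) with hE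
  set A : ℝ := p.toReal ^ (-(d : ℝ) / 2 / p.toReal) * q.toReal ^ (-(d : ℝ) / 2 / q.toReal)
  have hA : 0 < A := mul_pos (rpow_div_self_pos ENNReal.toReal_nonneg _)
    (rpow_div_self_pos ENNReal.toReal_nonneg _)
  refine ⟨max A A⁻¹ * 2 ^ |E|, by positivity, fun lam hlam => ?_⟩
  have hbase :
      (1 + lam) ^ ((d : ℝ) * (1 / p.toReal + 1 / q.toReal - 1)) = ((1 + lam) ^ 2) ^ E := by
    rw [← rpow_natCast, ← rpow_mul (by positivity), hE]
    ring_nf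
  have hu : lam ^ 2 + 1 ≤ 2 * (1 + lam) ^ 2 := by nlinarith
  have hv : (1 + lam) ^ 2 ≤ 2 * (lam ^ 2 + 1) := by nlinarith [sq_nonneg (1 - lam)]
  have hL : 0 ≤ lam ^ (-((d : ℝ) / p.toReal)) := by positivity
  rw [eLpNorm_eLpNorm_STFT_dilated_gaussian (zero_lt_one.trans_le hp).ne'
    (zero_lt_one.trans_le hq).ne' hlam, hbase]
  refine (inv_mul_le_and_le_mul_of_le_mul hA (by positivity) (by positivity) ?_ ?_).imp
    ENNReal.ofReal_le_ofReal ENNReal.ofReal_le_ofReal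
  · rw [mul_left_comm]
    exact mul_le_mul_of_nonneg_left
      (rpow_le_two_rpow_abs_mul_rpow (by positivity) (by positivity) hu hv E) hL
  · rw [mul_left_comm]
    exact mul_le_mul_of_nonneg_left
      (rpow_le_two_rpow_abs_mul_rpow (by positivity) (by positivity) hv hu E) hL
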